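/- Let n = 2k and let P ∈ H_n be a rank-k orthogonal projection. Then S(P) ∪ (−S(P)) does not contain any two-dimensional real linear subspace: if A, B ∈ H_n are nonzero with span_ℝ{A, B} ⊆ S(P) ∪ (−S(P)), then A and B are linearly dependent over ℝ. -/

import Mathlib

open Matrix

/-- `P` is an orthogonal projection of rank `k`. -/
def IsProjOfRank {m : Type*} [Fintype m] [DecidableEq m]
    (P : Matrix m m ℂ) (k : ℕ) : Prop :=
  P * P = P ∧ Pᴴ = P ∧ P.rank = k

/-- The `k`-numerical range `W_k(A) = { tr (A P) : P an orthogonal projection of rank k }`. -/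
def WK {m : Type*} [Fintype m] [DecidableEq m] (k : ℕ) (A : Matrix m m ℂ) : Set ℂ :=
  {z | ∃ P : Matrix m m ℂ, IsProjOfRank P k ∧ z = (A * P).trace}

/-- The `k`-numerical radius `w_k(A) = max { |tr (A P)| : P a rank-k orthogonal projection }`. -/
noncomputable def wk {m : Type*} [Fintype m] [DecidableEq m] (k : ℕ) (A : Matrix m m ℂ) : ℝ :=
  sSup {r : ℝ | ∃ P : Matrix m m ℂ, IsProjOfRank P k ∧ r = ‖(A * P).trace‖}

/-- `A` and `B` are parallel with respect to the `k`-numerical radius. -/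
noncomputable def ParallelWk {m : Type*} [Fintype m] [DecidableEq m]
    (k : ℕ) (A B : Matrix m m ℂ) : Prop :=
  ∃ μ : ℂ, ‖μ‖ = 1 ∧ wk k (A + μ • B) = wk k A + wk k B

/-- Sum of the `k` largest eigenvalues of a Hermitian matrix (`0` if not Hermitian). -/
noncomputable def sumKLargest {m : Type*} [Fintype m] [DecidableEq m]
    (k : ℕ) (A : Matrix m m ℂ) : ℝ :=
  if h : A.IsHermitian then
    sSup {r : ℝ | ∃ s : Finset m, s.card = k ∧ r = ∑ i ∈ s, h.eigenvalues i}
  else 0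

/-- Sum of the `k` smallest eigenvalues of a Hermitian matrix (`0` if not Hermitian). -/
noncomputable def sumKSmallest {m : Type*} [Fintype m] [DecidableEq m]
    (k : ℕ) (A : Matrix m m ℂ) : ℝ :=
  if h : A.IsHermitian then
    sInf {r : ℝ | ∃ s : Finset m, s.card = k ∧ r = ∑ i ∈ s, h.eigenvalues i}
  else 0

/-!
On `span_ℝ {A, B}` the functional `M ↦ tr (M P)` is real-valued, since each of its values is
`± w_k (± M)`; as a real functional on a plane it has a nonzero kernel vector `c A + d B`, where
the hypothesis then forces `w_k (± (c A + d B)) = 0`. For `0 < k < n`, `w_k` vanishes on a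
Hermitian matrix only at `0`: testing against the spectral projections shows that every sum of
`k` eigenvalues is `0`, so all eigenvalues are equal, hence zero.
-/

variable {m : Type*} [Fintype m] [DecidableEq m]

theorem isProjOfRank_iff {P : Matrix m m ℂ} {k : ℕ} :
    IsProjOfRank P k ↔ IsStarProjection P ∧ P.rank = k := by
  rw [IsProjOfRank, isStarProjection_iff, IsIdempotentElem, IsSelfAdjoint, star_eq_conjTranspose,
    and_assoc]

section
open scoped Matrix.Norms.L2Operator

theorem bddAbove_norm_trace_mul (k : ℕ) (M : Matrix m m ℂ) :
    BddAbove {r : ℝ | ∃ Q : Matrix m m ℂ, IsProjOfRank Q k ∧ r = ‖(M * Q).trace‖} := by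
  let f : Matrix m m ℂ →L[ℂ] ℂ :=
    LinearMap.toContinuousLinearMap ((traceLinearMap m ℂ ℂ).comp (LinearMap.mulLeft ℂ M))
  refine ⟨‖f‖, ?_⟩
  rintro _ ⟨Q, hQ, rfl⟩
  calc ‖(M * Q).trace‖ = ‖f Q‖ := rfl
    _ ≤ ‖f‖ * ‖Q‖ := f.le_opNorm Q
    _ ≤ ‖f‖ := mul_le_of_le_one_right (norm_nonneg f) ((isProjOfRank_iff.1 hQ).1.norm_le Q)

end

theorem norm_trace_mul_le_wk {k : ℕ} (M : Matrix m m ℂ) {Q : Matrix m m ℂ}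
    (hQ : IsProjOfRank Q k) : ‖(M * Q).trace‖ ≤ wk k M :=
  le_csSup (bddAbove_norm_trace_mul k M) ⟨Q, hQ, rfl⟩

theorem isProjOfRank_diagonal_indicator (s : Finset m) :
    IsProjOfRank (diagonal fun i => if i ∈ s then (1 : ℂ) else 0) s.card := by
  refine ⟨by simp [diagonal_mul_diagonal], by simp [diagonal_conjTranspose], ?_⟩
  rw [rank_diagonal]
  simp [Fintype.card_subtype]

theorem IsProjOfRank.conj_unitary {Q : Matrix m m ℂ} {k : ℕ} (hQ : IsProjOfRank Q k)
    (U : unitary (Matrix m m ℂ)) : IsProjOfRank (Unitary.conjStarAlgAut ℂ _ U Q) k := by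
  rw [isProjOfRank_iff] at hQ ⊢
  refine ⟨hQ.1.map _, ?_⟩
  rw [Unitary.conjStarAlgAut_apply, ← hQ.2, ← Unitary.coe_star,
    rank_mul_eq_left_of_isUnit_det _ _ (UnitaryGroup.det_isUnit (star U)),
    rank_mul_eq_right_of_isUnit_det _ _ (UnitaryGroup.det_isUnit U)]

theorem trace_conjStarAlgAut (U : unitary (Matrix m m ℂ)) (X : Matrix m m ℂ) :
    (Unitary.conjStarAlgAut ℂ _ U X).trace = X.trace := by
  rw [Unitary.conjStarAlgAut_apply, trace_mul_cycle, Unitary.coe_star_mul_self, Matrix.one_mul]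

theorem Matrix.IsHermitian.exists_isProjOfRank_trace_mul_eq_sum_eigenvalues {M : Matrix m m ℂ}
    (hM : M.IsHermitian) (s : Finset m) :
    ∃ Q : Matrix m m ℂ,
      IsProjOfRank Q s.card ∧ (M * Q).trace = ∑ i ∈ s, (hM.eigenvalues i : ℂ) := by
  refine ⟨_, (isProjOfRank_diagonal_indicator s).conj_unitary hM.eigenvectorUnitary, ?_⟩
  conv_lhs => enter [1, 1]; rw [hM.spectral_theorem]
  rw [← map_mul, trace_conjStarAlgAut, diagonal_mul_diagonal, trace_diagonal]
  simp [Finset.sum_ite_mem]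

theorem Finset.eq_zero_of_forall_card_eq_sum_eq_zero {ι : Type*} [Fintype ι] [DecidableEq ι]
    {k : ℕ} (hk₀ : 0 < k) (hk : k < Fintype.card ι) {f : ι → ℝ}
    (h : ∀ s : Finset ι, s.card = k → ∑ i ∈ s, f i = 0) : f = 0 := by
  have hconst : ∀ i j, f i = f j := by
    intro i j
    obtain rfl | hij := eq_or_ne i j
    · rfl
    -- compare two `k`-sets that differ only in `i` versus `j`
    obtain ⟨t, hts, htc⟩ : ∃ t ⊆ (univ.erase i).erase j, t.card = k - 1 := by
      refine exists_subset_card_eq ?_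
      rw [card_erase_of_mem (by simp [hij.symm]), card_erase_of_mem (mem_univ i), card_univ]
      omega
    have hit : i ∉ t := fun hi => by simpa using hts hi
    have hjt : j ∉ t := fun hj => by simpa using hts hj
    have hi := h (insert i t) (by rw [card_insert_of_notMem hit]; omega)
    have hj := h (insert j t) (by rw [card_insert_of_notMem hjt]; omega)
    rw [sum_insert hit] at hi
    rw [sum_insert hjt] at hj
    linarith
  obtain ⟨s, -, hs⟩ := exists_subset_card_eq (s := univ) (n := k) (by simpa using hk.le)
  obtain ⟨i₀, -⟩ := card_pos.mp (hs ▸ hk₀)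
  have hsum := h s hs
  rw [sum_congr rfl fun i _ => hconst i i₀, sum_const, hs, nsmul_eq_mul,
    mul_eq_zero, Nat.cast_eq_zero] at hsum
  funext i
  rw [hconst i i₀, hsum.resolve_left hk₀.ne']
  rfl

theorem Matrix.IsHermitian.eq_zero_of_wk_eq_zero {k : ℕ} {M : Matrix m m ℂ} (hM : M.IsHermitian)
    (hk₀ : 0 < k) (hk : k < Fintype.card m) (h : wk k M = 0) : M = 0 := by
  rw [← hM.eigenvalues_eq_zero_iff]
  refine Finset.eq_zero_of_forall_card_eq_sum_eq_zero hk₀ hk fun s hs => ?_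
  obtain ⟨Q, hQ, htr⟩ := hM.exists_isProjOfRank_trace_mul_eq_sum_eigenvalues s
  have hle := norm_trace_mul_le_wk M (hs ▸ hQ)
  rw [h, htr, norm_le_zero_iff] at hle
  exact_mod_cast hle

theorem exists_ne_zero_mul_add_mul_eq_zero (x y : ℝ) :
    ∃ c d : ℝ, ¬(c = 0 ∧ d = 0) ∧ c * x + d * y = 0 := by
  obtain rfl | hx := eq_or_ne x 0
  · exact ⟨1, 0, by simp, by simp⟩
  · exact ⟨y, -x, fun h => hx (neg_eq_zero.mp h.2), by ring⟩

theorem stmt_17_general (n k : ℕ) (hk : 1 ≤ k) (hn : n = 2 * k)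
    (P : Matrix (Fin n) (Fin n) ℂ)
    (A B : Matrix (Fin n) (Fin n) ℂ) (hA : A.IsHermitian) (hB : B.IsHermitian)
    (hspan : ∀ a b : ℝ,
      ((a • A + b • B) * P).trace = (wk k (a • A + b • B) : ℂ) ∨
      ((-(a • A + b • B)) * P).trace = (wk k (-(a • A + b • B)) : ℂ)) :
    ∃ c d : ℝ, ¬(c = 0 ∧ d = 0) ∧ c • A + d • B = 0 := by
  have him : ∀ a b : ℝ, ((a • A + b • B) * P).trace.im = 0 := fun a b => by
    rcases hspan a b with h | h
    · rw [h, Complex.ofReal_im]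
    · rw [← neg_eq_zero, ← Complex.neg_im, ← trace_neg, ← Matrix.neg_mul, h,
        Complex.ofReal_im]
  obtain ⟨c, d, hcd, hre⟩ :=
    exists_ne_zero_mul_add_mul_eq_zero (A * P).trace.re (B * P).trace.re
  refine ⟨c, d, hcd, ?_⟩
  have htr : ((c • A + d • B) * P).trace = 0 :=
    Complex.ext (by simpa [Matrix.add_mul] using hre) (him c d)
  have hM : (c • A + d • B).IsHermitian := (hA.smul (.all c)).add (hB.smul (.all d))
  have hkn : k < Fintype.card (Fin n) := by rw [Fintype.card_fin]; omega
  rcases hspan c d with h | h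
  · exact hM.eq_zero_of_wk_eq_zero hk hkn (by exact_mod_cast h.symm.trans htr)
  · have htr' : ((-(c • A + d • B)) * P).trace = 0 := by
      rw [Matrix.neg_mul, trace_neg, htr, neg_zero]
    exact neg_eq_zero.mp
      (hM.neg.eq_zero_of_wk_eq_zero hk hkn (by exact_mod_cast h.symm.trans htr'))

/-- for `n = 2k`, `S(P) ∪ (-S(P))` contains no two-dimensional real subspace:
if nonzero Hermitian `A, B` have `span_ℝ{A, B} ⊆ S(P) ∪ (-S(P))`, they are ℝ-linearly
dependent. -/
theorem stmt_17 (n k : ℕ) (hk : 1 ≤ k) (hn : n = 2 * k)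
    (P : Matrix (Fin n) (Fin n) ℂ) (hP : IsProjOfRank P k)
    (A B : Matrix (Fin n) (Fin n) ℂ) (hA : A.IsHermitian) (hB : B.IsHermitian)
    (hA0 : A ≠ 0) (hB0 : B ≠ 0)
    (hspan : ∀ a b : ℝ,
      ((a • A + b • B) * P).trace = (wk k (a • A + b • B) : ℂ) ∨
      ((-(a • A + b • B)) * P).trace = (wk k (-(a • A + b • B)) : ℂ)) :
    ∃ c d : ℝ, ¬(c = 0 ∧ d = 0) ∧ c • A + d • B = 0 :=
  stmt_17_general n k hk hn P A B hA hB hspan
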